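/- Let $G$ be a finite graph and $p \in [0,1]$. Let $X_p$ be the random induced subgraph of $G$ obtained by independently keeping each vertex with probability $p$ (Bernoulli) and deleting all resulting isolated vertices, and let $M_p$ be obtained by independently taking $\mathrm{Po}(p)$ copies of each vertex, adding induced edges, and deleting isolated vertices. Then there exists a coupling of $X_p$ and $M_p$ such that $\mathbb{P}(M_p \neq X_p \mid X_p) \le 2p\, v(X_p)$, where $v(X_p)$ is the number of vertices of $X_p$. -/

import Mathlib

/-!
Couple the two vertex selections so that at each vertex `Y ~ Po(p)` and `I = 1` unless `Y = 0`,
the Poisson mass `e^{-p}` at `0` being split into `1 - p` at `I = 0` and `e^{-p} - (1 - p) ≥ 0`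
at `I = 1`. Then `I i = 0` forces `Y i = 0`, so `M_p` can differ from `X_p` only if `Y i ≠ I i`
at a vertex `i` of `X_p`, and `P(Y i ≠ 1 | I i = 1) = 1 - e^{-p} ≤ p`. Conditioning on `X_p`
costs nothing: on `{I i = m i}` the event `{X_p = m}` is determined by the pairs at the other
vertices, which are independent of `(I i, Y i)`.
-/

open MeasureTheory
open scoped Classical

/-- The blow-up of a graph `G` along a multiplicity function `n : V → ℕ`: each vertex `i` is
replaced by `n i` copies, and copies are adjacent iff the original vertices are. -/
def blowup {V : Type*} (G : SimpleGraph V) (n : V → ℕ) : SimpleGraph (Σ i : V, Fin (n i)) :=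
  SimpleGraph.comap (fun a => a.1) G

/-- Delete isolated vertices: set the multiplicity of a vertex to `0` unless it is present and
has a present neighbour (so that its copies are non-isolated in the blow-up). -/
noncomputable def delIso {V : Type*} (G : SimpleGraph V) (n : V → ℕ) : V → ℕ :=
  fun i => if 0 < n i ∧ ∃ j, G.Adj i j ∧ 0 < n j then n i else 0

open ProbabilityTheory Set Finset
open scoped ENNReal Nat

namespace ProbabilityTheory

variable {Ω : Type*} [MeasurableSpace Ω] {μ : Measure Ω}

lemma IndepFun.measure_inter_preimage_le_mul {α β : Type*} [MeasurableSpace α]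
    [MeasurableSpace β] {X : Ω → α} {W : Ω → β} (h : IndepFun X W μ) {s t : Set α}
    {D : Set β} (hs : MeasurableSet s) (ht : MeasurableSet t) (hD : MeasurableSet D)
    {r : ℝ≥0∞} (hst : μ (X ⁻¹' s) ≤ r * μ (X ⁻¹' t)) :
    μ (X ⁻¹' s ∩ W ⁻¹' D) ≤ r * μ (X ⁻¹' t ∩ W ⁻¹' D) := by
  rw [h.measure_inter_preimage_eq_mul _ _ hs hD, h.measure_inter_preimage_eq_mul _ _ ht hD,
    ← mul_assoc]
  gcongr

lemma iIndepFun.indepFun_update {ι β : Type*} [Fintype ι] [MeasurableSpace β]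
    {f : ι → Ω → β} (hf : iIndepFun f μ) (hm : ∀ i, Measurable (f i)) (i : ι) (b : β) :
    IndepFun (f i) (fun ω => Function.update (fun j => f j ω) i b) μ := by
  have h := hf.indepFun_finset {i} (univ.erase i) (by simp) hm
  have hg : Measurable fun (h : {j // j ∈ univ.erase i} → β) (j : ι) =>
      if hj : j = i then b else h ⟨j, mem_erase.2 ⟨hj, mem_univ j⟩⟩ := by
    refine measurable_pi_lambda _ fun j => ?_
    by_cases hj : j = i
    · simp only [hj, dite_true]; exact measurable_const
    · simp only [hj, dite_false]; exact measurable_pi_apply _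
  convert h.comp (measurable_pi_apply ⟨i, mem_singleton_self i⟩) hg using 1
  · rfl
  · funext ω j
    by_cases hj : j = i
    · subst hj; simp
    · simp [hj]

end ProbabilityTheory

lemma card_filter_ne_zero_le_sum {ι : Type*} [Fintype ι] (m : ι → ℕ) :
    #{i | m i ≠ 0} ≤ ∑ i, m i :=
  calc #{i | m i ≠ 0} = ∑ _ ∈ {i | m i ≠ 0}, 1 := card_eq_sum_ones _
    _ ≤ ∑ i ∈ {i | m i ≠ 0}, m i :=
        sum_le_sum fun _ hi => Nat.one_le_iff_ne_zero.2 (mem_filter.1 hi).2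
    _ ≤ ∑ i, m i := sum_le_sum_of_subset (subset_univ _)

section DelIso

variable {V : Type*} (G : SimpleGraph V)

lemma delIso_eq_self_of_ne_zero {a : V → ℕ} {i : V} (h : delIso G a i ≠ 0) :
    delIso G a i = a i := by
  unfold delIso at *
  split_ifs at * <;> simp_all

lemma delIso_ne_zero_iff {a : V → ℕ} {i : V} :
    delIso G a i ≠ 0 ↔ a i ≠ 0 ∧ ∃ j, G.Adj i j ∧ a j ≠ 0 := by
  simp only [delIso, Nat.pos_iff_ne_zero]
  split_ifs with h <;> simp [h]

lemma delIso_congr {a b : V → ℕ} (h0 : ∀ i, a i = 0 → b i = 0)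
    (h1 : ∀ i, delIso G a i ≠ 0 → b i = a i) : delIso G b = delIso G a := by
  funext i
  by_cases hai : delIso G a i = 0
  · rw [hai]
    by_contra hbi
    obtain ⟨hi, j, hij, hj⟩ := (delIso_ne_zero_iff G).1 hbi
    exact (delIso_ne_zero_iff G).2 ⟨fun h => hi (h0 i h), j, hij, fun h => hj (h0 j h)⟩ hai
  · obtain ⟨hi, j, hij, hj⟩ := (delIso_ne_zero_iff G).1 hai
    have hbj : b j = a j := h1 j ((delIso_ne_zero_iff G).2 ⟨hj, i, hij.symm, hi⟩)
    have hbi : delIso G b i ≠ 0 :=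
      (delIso_ne_zero_iff G).2 ⟨by rwa [h1 i hai], j, hij, by rwa [hbj]⟩
    rw [delIso_eq_self_of_ne_zero G hbi, delIso_eq_self_of_ne_zero G hai, h1 i hai]

end DelIso

section Estimate

variable {Ω : Type*} [MeasurableSpace Ω] {μ : Measure Ω} {V : Type*} [Fintype V]
  (G : SimpleGraph V) {I Y : V → Ω → ℕ}

lemma measure_ne_inter_delIso_eq_le (hind : iIndepFun (fun i ω => (I i ω, Y i ω)) μ)
    (hmeas : ∀ i, Measurable fun ω => (I i ω, Y i ω)) {r : ℝ≥0∞}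
    (hr : ∀ i c, c ≠ 0 → μ {ω | I i ω = c ∧ Y i ω ≠ c} ≤ r * μ {ω | I i ω = c})
    (m : V → ℕ) {i : V} (hi : m i ≠ 0) :
    μ ({ω | Y i ω ≠ I i ω} ∩ {ω | delIso G (fun j => I j ω) = m})
      ≤ r * μ {ω | delIso G (fun j => I j ω) = m} := by
  -- `W` forgets the pair at `i`, yet on `{I i = m i}` it still decides whether `X_p = m`.
  set W := fun ω => Function.update (fun j => (I j ω, Y j ω)) i (m i, 0)
  set D : Set (V → ℕ × ℕ) := {f | delIso G (fun j => (f j).1) = m}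
  have hW : ∀ ω, I i ω = m i → (W ω ∈ D ↔ delIso G (fun j => I j ω) = m) := by
    intro ω h
    have : (fun j => (W ω j).1) = fun j => I j ω := by
      funext j
      by_cases hj : j = i
      · subst hj; simp [W, h]
      · simp [W, hj]
    simp only [D, mem_ofPred_eq, this]
  have hIi : ∀ ω, delIso G (fun j => I j ω) = m → I i ω = m i := fun ω h => by
    rw [← h, delIso_eq_self_of_ne_zero G (by rwa [h])]
  have hA : {ω | Y i ω ≠ I i ω} ∩ {ω | delIso G (fun j => I j ω) = m}
      = (fun ω => (I i ω, Y i ω)) ⁻¹' {x | x.1 = m i ∧ x.2 ≠ m i} ∩ W ⁻¹' D := by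
    ext ω
    simp only [mem_inter_iff, Set.mem_preimage, mem_ofPred_eq]
    grind
  have hB : {ω | delIso G (fun j => I j ω) = m}
      = (fun ω => (I i ω, Y i ω)) ⁻¹' {x | x.1 = m i} ∩ W ⁻¹' D := by
    ext ω
    simp only [mem_inter_iff, Set.mem_preimage, mem_ofPred_eq]
    grind
  rw [hA, hB]
  exact (hind.indepFun_update hmeas i (m i, 0)).measure_inter_preimage_le_mul .of_discrete
    .of_discrete .of_discrete (hr i (m i) hi)

theorem measure_delIso_ne_inter_le (hind : iIndepFun (fun i ω => (I i ω, Y i ω)) μ)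
    (hmeas : ∀ i, Measurable fun ω => (I i ω, Y i ω))
    (h0 : ∀ i, μ {ω | I i ω = 0 ∧ Y i ω ≠ 0} = 0) {r : ℝ≥0∞}
    (hr : ∀ i c, c ≠ 0 → μ {ω | I i ω = c ∧ Y i ω ≠ c} ≤ r * μ {ω | I i ω = c})
    (m : V → ℕ) :
    μ ({ω | delIso G (fun i => Y i ω) ≠ delIso G (fun i => I i ω)}
        ∩ {ω | delIso G (fun i => I i ω) = m})
      ≤ #{i | m i ≠ 0} * r * μ {ω | delIso G (fun i => I i ω) = m} := by
  set D := {ω | delIso G (fun i => I i ω) = m}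
  have hsub : {ω | delIso G (fun i => Y i ω) ≠ delIso G (fun i => I i ω)} ∩ D
      ⊆ (⋃ i, {ω | I i ω = 0 ∧ Y i ω ≠ 0}) ∪ ⋃ i ∈ ({i | m i ≠ 0} : Finset V),
          ({ω | Y i ω ≠ I i ω} ∩ D) := by
    rintro ω ⟨hne, hD⟩
    by_contra hω
    simp only [mem_union, mem_iUnion, mem_inter_iff, mem_ofPred_eq, Finset.mem_filter,
      Finset.mem_univ, true_and, not_or, not_exists, not_and, not_not] at hω
    refine hne (delIso_congr G hω.1 fun i h => ?_)
    by_contra hy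
    exact hω.2 i (by rwa [← hD]) hy hD
  calc _ ≤ μ (⋃ i, {ω | I i ω = 0 ∧ Y i ω ≠ 0})
        + μ (⋃ i ∈ ({i | m i ≠ 0} : Finset V), ({ω | Y i ω ≠ I i ω} ∩ D)) :=
        (measure_mono hsub).trans (measure_union_le _ _)
    _ ≤ ∑ i ∈ ({i | m i ≠ 0} : Finset V), μ ({ω | Y i ω ≠ I i ω} ∩ D) := by
        rw [measure_iUnion_null h0, zero_add]
        exact measure_biUnion_finset_le _ _
    _ ≤ ∑ i ∈ ({i | m i ≠ 0} : Finset V), r * μ D :=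
        sum_le_sum fun i hi => measure_ne_inter_delIso_eq_le G hind hmeas hr m (by simpa using hi)
    _ = #{i | m i ≠ 0} * r * μ D := by rw [sum_const, nsmul_eq_mul, mul_assoc]

end Estimate

section Coupling

noncomputable def couplingWeight (p : ℝ) : ℕ × ℕ → ℝ≥0∞
  | (0, 0) => ENNReal.ofReal (1 - p)
  | (1, 0) => ENNReal.ofReal (Real.exp (-p) - (1 - p))
  | (1, k) => ENNReal.ofReal (p ^ k * Real.exp (-p) / k !)
  | _ => 0

variable {p : ℝ}

lemma couplingWeight_eq_zero {x : ℕ × ℕ} (h0 : x ≠ (0, 0)) (h1 : x.1 ≠ 1) :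
    couplingWeight p x = 0 := by
  obtain ⟨_ | _ | a, _ | b⟩ := x <;> simp_all [couplingWeight]

lemma tsum_couplingWeight_fst (hp1 : p ≤ 1) (b : ℕ) :
    ∑' a, couplingWeight p (a, b) = ENNReal.ofReal (p ^ b * Real.exp (-p) / b !) := by
  rw [tsum_eq_sum (s := {0, 1}) fun a ha => couplingWeight_eq_zero (by aesop) (by aesop),
    Finset.sum_pair zero_ne_one]
  rcases b with _ | b
  · have : 1 - p ≤ Real.exp (-p) := by linarith [Real.add_one_le_exp (-p)]
    rw [couplingWeight, couplingWeight, ← ENNReal.ofReal_add (by linarith) (by linarith)]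
    simp
  · simp [couplingWeight]

lemma hasSum_poisson_weights (hp0 : 0 ≤ p) :
    HasSum (fun k : ℕ => p ^ k * Real.exp (-p) / k !) 1 := by
  convert hasSum_one_poissonMeasure p.toNNReal using 2 with k
  rw [Real.coe_toNNReal p hp0]
  ring

lemma tsum_couplingWeight (hp0 : 0 ≤ p) (hp1 : p ≤ 1) : ∑' x, couplingWeight p x = 1 := by
  rw [ENNReal.tsum_prod', ENNReal.tsum_comm]
  simp_rw [tsum_couplingWeight_fst hp1]
  rw [← ENNReal.ofReal_tsum_of_nonneg (fun k => by positivity)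
    (hasSum_poisson_weights hp0).summable, (hasSum_poisson_weights hp0).tsum_eq,
    ENNReal.ofReal_one]

noncomputable def couplingPMF (hp0 : 0 ≤ p) (hp1 : p ≤ 1) : PMF (ℕ × ℕ) :=
  ⟨couplingWeight p, ENNReal.summable.hasSum_iff.2 (tsum_couplingWeight hp0 hp1)⟩

variable (hp0 : 0 ≤ p) (hp1 : p ≤ 1)

lemma couplingPMF_toMeasure_apply (s : Set (ℕ × ℕ)) :
    (couplingPMF hp0 hp1).toMeasure s = ∑' x, s.indicator (couplingWeight p) x :=
  PMF.toMeasure_apply _ .of_discrete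

lemma couplingPMF_toMeasure_of_forall_fst_ne_one {s : Set (ℕ × ℕ)}
    (hs : ∀ x ∈ s, x.1 ≠ 1) :
    (couplingPMF hp0 hp1).toMeasure s = s.indicator (couplingWeight p) (0, 0) := by
  rw [couplingPMF_toMeasure_apply, tsum_eq_single (0, 0) fun x hx => ?_]
  by_cases hxs : x ∈ s
  · rw [indicator_of_mem hxs, couplingWeight_eq_zero hx (hs x hxs)]
  · exact indicator_of_notMem hxs _

lemma couplingPMF_fst_eq_zero :
    (couplingPMF hp0 hp1).toMeasure {x | x.1 = 0} = ENNReal.ofReal (1 - p) := by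
  rw [couplingPMF_toMeasure_of_forall_fst_ne_one _ _ (by simp)]
  simp [couplingWeight]

lemma couplingPMF_fst_eq_one :
    (couplingPMF hp0 hp1).toMeasure {x | x.1 = 1} = ENNReal.ofReal p := by
  have hcompl : (couplingPMF hp0 hp1).toMeasure {x | x.1 = 1}ᶜ = ENNReal.ofReal (1 - p) := by
    rw [couplingPMF_toMeasure_of_forall_fst_ne_one _ _ (s := {x | x.1 = 1}ᶜ) fun x hx => hx]
    simp [couplingWeight]
  rw [← ENNReal.sub_sub_cancel ENNReal.one_ne_top prob_le_one,
    ← prob_compl_eq_one_sub .of_discrete, hcompl, ← ENNReal.ofReal_one,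
    ← ENNReal.ofReal_sub _ (by linarith), sub_sub_cancel]

lemma couplingPMF_snd_eq (k : ℕ) :
    (couplingPMF hp0 hp1).toMeasure {x | x.2 = k}
      = ENNReal.ofReal (p ^ k * Real.exp (-p) / k !) := by
  rw [couplingPMF_toMeasure_apply, ENNReal.tsum_prod', ← tsum_couplingWeight_fst hp1 k]
  refine tsum_congr fun a => ?_
  rw [tsum_eq_single k fun b hb => by simp [hb]]
  simp

lemma couplingPMF_fst_eq_zero_snd_ne_zero :
    (couplingPMF hp0 hp1).toMeasure {x | x.1 = 0 ∧ x.2 ≠ 0} = 0 := by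
  rw [couplingPMF_toMeasure_of_forall_fst_ne_one _ _ (by simp +contextual)]
  simp

lemma couplingPMF_fst_eq_snd_ne_le {c : ℕ} (hc : c ≠ 0) :
    (couplingPMF hp0 hp1).toMeasure {x | x.1 = c ∧ x.2 ≠ c}
      ≤ ENNReal.ofReal p * (couplingPMF hp0 hp1).toMeasure {x | x.1 = c} := by
  obtain rfl | hc1 := eq_or_ne c 1
  · have hdiff : {x : ℕ × ℕ | x.1 = 1 ∧ x.2 ≠ 1} = {x | x.1 = 1} \ {(1, 1)} := by
      ext ⟨a, b⟩
      simp +contextual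
    calc (couplingPMF hp0 hp1).toMeasure {x | x.1 = 1 ∧ x.2 ≠ 1}
        = ENNReal.ofReal p - ENNReal.ofReal (p * Real.exp (-p)) := by
          rw [hdiff, measure_sdiff (by simp) MeasurableSet.of_discrete.nullMeasurableSet
            (measure_ne_top _ _), couplingPMF_fst_eq_one,
            PMF.toMeasure_apply_singleton _ _ .of_discrete]
          change _ - couplingWeight p (1, 1) = _
          simp [couplingWeight]
      _ ≤ ENNReal.ofReal (p * p) := by
          rw [← ENNReal.ofReal_sub _ (by positivity)]
          exact ENNReal.ofReal_le_ofReal (by nlinarith [Real.add_one_le_exp (-p)])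
      _ = ENNReal.ofReal p * (couplingPMF hp0 hp1).toMeasure {x | x.1 = 1} := by
          rw [couplingPMF_fst_eq_one, ENNReal.ofReal_mul hp0]
  · rw [couplingPMF_toMeasure_of_forall_fst_ne_one _ _ (by simp +contextual [hc1])]
    simp [Ne.symm hc]

end Coupling

/-- **Coupling of Bernoulli and Poisson vertex selections.**
Given a finite graph `G` and `p ∈ [0,1]`, there is a coupling of the random induced subgraph
`X_p` (keep each vertex independently with probability `p`, delete isolated vertices) and the
random multigraph `M_p` (take `Po(p)` copies of each vertex, add induced edges, delete isolated
vertices) such that `P(M_p ≠ X_p ∣ X_p) ≤ 2 p v(X_p)`. -/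
theorem stmt2 {V : Type*} [Fintype V] (G : SimpleGraph V) (p : ℝ)
    (hp : p ∈ Set.Icc (0 : ℝ) 1) :
    ∃ (Ω : Type) (_ : MeasurableSpace Ω) (μ : Measure Ω) (_ : IsProbabilityMeasure μ)
      (I Y : V → Ω → ℕ),
      -- the pairs `(I i, Y i)` are independent over `i ∈ V`
      ProbabilityTheory.iIndepFun
        (fun i ω => (I i ω, Y i ω)) μ ∧
      -- `I i ~ Be(p)`
      (∀ i, μ {ω | I i ω = 1} = ENNReal.ofReal p ∧
            μ {ω | I i ω = 0} = ENNReal.ofReal (1 - p)) ∧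
      -- `Y i ~ Po(p)`
      (∀ i k, μ {ω | Y i ω = k}
          = ENNReal.ofReal (p ^ k * Real.exp (-p) / (k.factorial : ℝ))) ∧
      -- conditionally on `X_p` (i.e. on the reduced Bernoulli multiplicity function), the
      -- probability that `M_p` and `X_p` differ as graphs is at most `2 p v(X_p)`:
      (∀ m : V → ℕ,
        μ ({ω | ¬ Nonempty
              (blowup G (delIso G fun i => Y i ω) ≃g blowup G (delIso G fun i => I i ω))} ∩
            {ω | (delIso G fun i => I i ω) = m})
          ≤ ENNReal.ofReal (2 * p * (∑ i : V, m i)) * μ {ω | (delIso G fun i => I i ω) = m}) := by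
  obtain ⟨hp0, hp1⟩ := hp
  set ν := (couplingPMF hp0 hp1).toMeasure
  obtain ⟨Ω, _, μ, Z, hmeas, hlaw, hind, _⟩ := exists_iid (Fin (Fintype.card V)) ν
  set e := Fintype.equivFin V
  have hZ : ∀ i (q : ℕ × ℕ → Prop), μ {ω | q (Z (e i) ω)} = ν {x | q x} :=
    fun i q => (hlaw (e i)).measure_eq .of_discrete
  refine ⟨Ω, _, μ, inferInstance, fun i ω => (Z (e i) ω).1, fun i ω => (Z (e i) ω).2,
    hind.precomp e.injective,
    fun i => ⟨(hZ i _).trans (couplingPMF_fst_eq_one hp0 hp1),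
      (hZ i _).trans (couplingPMF_fst_eq_zero hp0 hp1)⟩,
    fun i k => (hZ i _).trans (couplingPMF_snd_eq hp0 hp1 k), fun m => ?_⟩
  calc _ ≤ μ ({ω | delIso G (fun i => (Z (e i) ω).2) ≠ delIso G (fun i => (Z (e i) ω).1)}
          ∩ {ω | delIso G (fun i => (Z (e i) ω).1) = m}) := by
        refine measure_mono (inter_subset_inter_left _ fun ω hω heq => hω ?_)
        rw [heq]
        exact ⟨.refl⟩
    _ ≤ #{i | m i ≠ 0} * ENNReal.ofReal p * μ {ω | delIso G (fun i => (Z (e i) ω).1) = m} :=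
        measure_delIso_ne_inter_le G (hind.precomp e.injective) (fun i => hmeas (e i))
          (fun i => (hZ i _).trans (couplingPMF_fst_eq_zero_snd_ne_zero hp0 hp1))
          (fun i c hc => (hZ i (fun x => x.1 = c ∧ x.2 ≠ c)).trans_le <|
            (couplingPMF_fst_eq_snd_ne_le hp0 hp1 hc).trans_eq
              (congrArg _ (hZ i (fun x => x.1 = c)).symm)) m
    _ ≤ _ := by
        gcongr
        rw [← ENNReal.ofReal_natCast, ← ENNReal.ofReal_mul (by positivity)]
        refine ENNReal.ofReal_le_ofReal ?_
        have : (#{i | m i ≠ 0} : ℝ) ≤ (∑ i, m i : ℕ) := by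
          exact_mod_cast card_filter_ne_zero_le_sum m
        nlinarith
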